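/- For every D > 0 there exists a constant C_b > 0, depending only on σ'_max, σ''_max and μ''_max, such that the map Θ = (A,b,C,d) ↦ (∂φ̃(Θ)/∂b_1, …, ∂φ̃(Θ)/∂b_ℓ) ∈ ℝ^ℓ is Lipschitz continuous on the set 𝒟 = {Θ : ‖Θ‖ ≤ D} with a Lipschitz constant L_b satisfying L_b² ≤ C_b · n² D² · max{ ℓ D² L_Z² , ℓ² D⁶ L_Z² , ℓ³ D⁴ , n ℓ }. -/

import Mathlib

open scoped BigOperators

/-- Index type for the upper-triangular entries of an `n × n` matrix
(a set of cardinality `n (n + 1) / 2`). -/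
abbrev UIdx (n : ℕ) : Type := {p : Fin n × Fin n // p.1 ≤ p.2}

/-- The operator `h` sending a symmetric matrix to the vector of
its upper-triangular entries. -/
def hv {n : ℕ} (S : Matrix (Fin n) (Fin n) ℝ) : UIdx n → ℝ :=
  fun p => S p.1.1 p.1.2

/-- Flattening index: entry `(i, s)` of an `n × k` matrix corresponds to
coordinate `i * k + s` of its row-by-row vectorization (the inverse of `g`). -/
def fidx {n k : ℕ} (i : Fin n) (s : Fin k) : Fin (n * k) :=
  ⟨i.1 * k + s.1, by
    calc i.1 * k + s.1 < i.1 * k + k := Nat.add_lt_add_left s.2 _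
      _ = (i.1 + 1) * k := by ring
      _ ≤ n * k := Nat.mul_le_mul (Nat.succ_le_of_lt i.2) le_rfl⟩

/-- `Z = A h(Σ) + b`. -/
noncomputable def Zv {n ℓ : ℕ} (S : Matrix (Fin n) (Fin n) ℝ)
    (A : Matrix (Fin ℓ) (UIdx n) ℝ) (b : Fin ℓ → ℝ) : Fin ℓ → ℝ :=
  fun i => A.mulVec (hv S) i + b i

/-- `X = C σ̃(Z) + d`. -/
noncomputable def Xv {n k ℓ : ℕ} (σ : ℝ → ℝ) (S : Matrix (Fin n) (Fin n) ℝ)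
    (A : Matrix (Fin ℓ) (UIdx n) ℝ) (b : Fin ℓ → ℝ)
    (C : Matrix (Fin (n * k)) (Fin ℓ) ℝ) (d : Fin (n * k) → ℝ) :
    Fin (n * k) → ℝ :=
  fun ν => C.mulVec (fun i => σ (Zv S A b i)) ν + d ν

/-- `ω i j = [g(X) g(X)ᵀ − Σ]_{i,j}`. -/
noncomputable def omE {n k ℓ : ℕ} (σ : ℝ → ℝ) (S : Matrix (Fin n) (Fin n) ℝ)
    (A : Matrix (Fin ℓ) (UIdx n) ℝ) (b : Fin ℓ → ℝ)
    (C : Matrix (Fin (n * k)) (Fin ℓ) ℝ) (d : Fin (n * k) → ℝ)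
    (i j : Fin n) : ℝ :=
  (∑ s : Fin k, Xv σ S A b C d (fidx i s) * Xv σ S A b C d (fidx j s)) - S i j

/-- The single-layer objective `φ̃(Θ) = Σ_{i,j} μ(ω_{i,j})`. -/
noncomputable def phiT {n k ℓ : ℕ} (σ μ : ℝ → ℝ) (S : Matrix (Fin n) (Fin n) ℝ)
    (A : Matrix (Fin ℓ) (UIdx n) ℝ) (b : Fin ℓ → ℝ)
    (C : Matrix (Fin (n * k)) (Fin ℓ) ℝ) (d : Fin (n * k) → ℝ) : ℝ :=
  ∑ i : Fin n, ∑ j : Fin n, μ (omE σ S A b C d i j)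
/-- Partial derivative of `φ̃` with respect to the bias entry `b_ι`. -/
noncomputable def gbv {n k ℓ : ℕ} (σ μ : ℝ → ℝ) (S : Matrix (Fin n) (Fin n) ℝ)
    (A : Matrix (Fin ℓ) (UIdx n) ℝ) (b : Fin ℓ → ℝ)
    (C : Matrix (Fin (n * k)) (Fin ℓ) ℝ) (d : Fin (n * k) → ℝ) (ι : Fin ℓ) : ℝ :=
  deriv (fun t : ℝ => phiT σ μ S A (b + t • (Pi.single ι 1 : Fin ℓ → ℝ)) C d) 0

/-- Partial derivative of `φ̃` with respect to the weight entry `A_{ι,η}`. -/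
noncomputable def gAv {n k ℓ : ℕ} (σ μ : ℝ → ℝ) (S : Matrix (Fin n) (Fin n) ℝ)
    (A : Matrix (Fin ℓ) (UIdx n) ℝ) (b : Fin ℓ → ℝ)
    (C : Matrix (Fin (n * k)) (Fin ℓ) ℝ) (d : Fin (n * k) → ℝ)
    (ι : Fin ℓ) (η : UIdx n) : ℝ :=
  deriv (fun t : ℝ => phiT σ μ S (A + t • Matrix.single ι η 1) b C d) 0

/-- Partial derivative of `φ̃` with respect to the weight entry `C_{ν,ι}`. -/
noncomputable def gCv {n k ℓ : ℕ} (σ μ : ℝ → ℝ) (S : Matrix (Fin n) (Fin n) ℝ)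
    (A : Matrix (Fin ℓ) (UIdx n) ℝ) (b : Fin ℓ → ℝ)
    (C : Matrix (Fin (n * k)) (Fin ℓ) ℝ) (d : Fin (n * k) → ℝ)
    (ν : Fin (n * k)) (ι : Fin ℓ) : ℝ :=
  deriv (fun t : ℝ => phiT σ μ S A b (C + t • Matrix.single ν ι 1) d) 0

/-- Partial derivative of `φ̃` with respect to the bias entry `d_ν`. -/
noncomputable def gdv {n k ℓ : ℕ} (σ μ : ℝ → ℝ) (S : Matrix (Fin n) (Fin n) ℝ)
    (A : Matrix (Fin ℓ) (UIdx n) ℝ) (b : Fin ℓ → ℝ)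
    (C : Matrix (Fin (n * k)) (Fin ℓ) ℝ) (d : Fin (n * k) → ℝ)
    (ν : Fin (n * k)) : ℝ :=
  deriv (fun t : ℝ => phiT σ μ S A b C (d + t • (Pi.single ν 1 : Fin (n * k) → ℝ))) 0

/-- Squared Frobenius-type norm of the parameter tuple `Θ = (A, b, C, d)`. -/
noncomputable def pns {n k ℓ : ℕ}
    (A : Matrix (Fin ℓ) (UIdx n) ℝ) (b : Fin ℓ → ℝ)
    (C : Matrix (Fin (n * k)) (Fin ℓ) ℝ) (d : Fin (n * k) → ℝ) : ℝ :=
  (∑ ι, ∑ η, A ι η ^ 2) + (∑ ι, b ι ^ 2) + (∑ ν, ∑ ι, C ν ι ^ 2) + ∑ ν, d ν ^ 2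

/-!
Write `G = g(X)` and `ρ = μ'(G Gᵀ - Σ)` entrywise. The chain rule gives
`∂φ̃/∂b = σ'(Z) ⊙ Cᵀ vec((ρ + ρᵀ) G)`. Every step of this expression is either an entrywise
Lipschitz map (`σ`, `σ'`, `μ'`) or a product whose Frobenius norm is at most the product of the
norms of its factors, so `‖xy - x̄ȳ‖ ≤ ‖x - x̄‖ ‖y‖ + ‖x̄‖ ‖y - ȳ‖` propagates differences through
the layers. On the ball `‖Θ‖ ≤ D` the factors are bounded: `‖σ̃(Z)‖ ≤ √ℓ`, `‖G‖ ≤ 2 D √ℓ` and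
`‖ρ‖ ≤ n`. The resulting Lipschitz constant is a sum of six monomials, and the square of each
is dominated by `n² D²` times one of the four terms of the maximum.
-/

open WithLp
open scoped Matrix

attribute [local instance] Matrix.frobeniusNormedAddCommGroup

section Norms

variable {ι m p : Type*} [Fintype ι] [Fintype m] [Fintype p]

lemma norm_toLp_eq_sqrt (v : ι → ℝ) : ‖toLp 2 v‖ = √(∑ i, v i ^ 2) := by
  simp [EuclideanSpace.norm_eq]

lemma Matrix.frobenius_norm_eq_sqrt (A : Matrix m p ℝ) : ‖A‖ = √(∑ i, ∑ j, A i j ^ 2) := by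
  rw [Matrix.frobenius_norm_def, Real.sqrt_eq_rpow]
  simp

lemma norm_toLp_le_of_abs_le {u v : ι → ℝ} {K : ℝ} (hK : 0 ≤ K)
    (h : ∀ i, |u i| ≤ K * |v i|) : ‖toLp 2 u‖ ≤ K * ‖toLp 2 v‖ := by
  rw [norm_toLp_eq_sqrt, norm_toLp_eq_sqrt, ← Real.sqrt_sq hK, ← Real.sqrt_mul (sq_nonneg K),
    Finset.mul_sum]
  gcongr with i
  simpa [mul_pow] using pow_le_pow_left₀ (abs_nonneg _) (h i) 2

lemma Matrix.frobenius_norm_le_of_abs_le {A B : Matrix m p ℝ} {K : ℝ} (hK : 0 ≤ K)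
    (h : ∀ i j, |A i j| ≤ K * |B i j|) : ‖A‖ ≤ K * ‖B‖ := by
  rw [frobenius_norm_eq_sqrt, frobenius_norm_eq_sqrt, ← Real.sqrt_sq hK,
    ← Real.sqrt_mul (sq_nonneg K), Finset.mul_sum]
  gcongr with i
  rw [Finset.mul_sum]
  gcongr with j
  simpa [mul_pow] using pow_le_pow_left₀ (abs_nonneg _) (h i j) 2

lemma norm_toLp_le_sqrt_card {u : ι → ℝ} (h : ∀ i, |u i| ≤ 1) :
    ‖toLp 2 u‖ ≤ √(Fintype.card ι) := by
  rw [norm_toLp_eq_sqrt]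
  gcongr
  calc ∑ i, u i ^ 2 ≤ ∑ _i : ι, (1 : ℝ) := by
        gcongr with i
        simpa using pow_le_pow_left₀ (abs_nonneg _) (h i) 2
    _ = Fintype.card ι := by simp

lemma Matrix.frobenius_norm_le_card {A : Matrix m m ℝ} (h : ∀ i j, |A i j| ≤ 1) :
    ‖A‖ ≤ Fintype.card m := by
  rw [frobenius_norm_eq_sqrt, Real.sqrt_le_left (by positivity)]
  calc ∑ i, ∑ j, A i j ^ 2 ≤ ∑ _i : m, ∑ _j : m, (1 : ℝ) := by
        gcongr with i _ j
        simpa using pow_le_pow_left₀ (abs_nonneg _) (h i j) 2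
    _ = (Fintype.card m : ℝ) ^ 2 := by simp [sq]

lemma Matrix.frobenius_norm_add_transpose_le (P : Matrix m m ℝ) : ‖P + Pᵀ‖ ≤ 2 * ‖P‖ := by
  simpa [two_mul] using norm_add_le P Pᵀ

lemma Matrix.norm_toLp_mulVec_le (A : Matrix m p ℝ) (v : p → ℝ) :
    ‖toLp 2 (A *ᵥ v)‖ ≤ ‖A‖ * ‖toLp 2 v‖ := by
  rw [← frobenius_norm_replicateCol (ι := Unit), ← frobenius_norm_replicateCol (ι := Unit),
    replicateCol_mulVec]
  exact frobenius_norm_mul _ _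

lemma Matrix.norm_toLp_mulVec_sub_mulVec_le (A B : Matrix m p ℝ) (v w : p → ℝ) :
    ‖toLp 2 (A *ᵥ v - B *ᵥ w)‖ ≤ ‖A - B‖ * ‖toLp 2 v‖ + ‖B‖ * ‖toLp 2 (v - w)‖ := by
  have h : A *ᵥ v - B *ᵥ w = (A - B) *ᵥ v + B *ᵥ (v - w) := by
    rw [sub_mulVec, mulVec_sub]; abel
  rw [h, toLp_add]
  exact (norm_add_le _ _).trans (add_le_add (norm_toLp_mulVec_le _ _) (norm_toLp_mulVec_le _ _))

lemma Matrix.norm_toLp_affine_sub_le (C C' : Matrix m p ℝ) (y y' : p → ℝ) (d d' : m → ℝ) :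
    ‖toLp 2 ((C *ᵥ y + d) - (C' *ᵥ y' + d'))‖ ≤
      ‖C - C'‖ * ‖toLp 2 y‖ + ‖C'‖ * ‖toLp 2 (y - y')‖ + ‖toLp 2 (d - d')‖ := by
  rw [add_sub_add_comm, toLp_add]
  exact (norm_add_le _ _).trans (add_le_add_left (norm_toLp_mulVec_sub_mulVec_le _ _ _ _) _)

lemma Matrix.frobenius_norm_mul_sub_mul_le {q : Type*} [Fintype q] (A A' : Matrix m p ℝ)
    (B B' : Matrix p q ℝ) : ‖A * B - A' * B'‖ ≤ ‖A - A'‖ * ‖B‖ + ‖A'‖ * ‖B - B'‖ := by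
  have h : A * B - A' * B' = (A - A') * B + A' * (B - B') := by
    rw [Matrix.sub_mul, Matrix.mul_sub]; abel
  rw [h]
  exact (norm_add_le _ _).trans (add_le_add (frobenius_norm_mul _ _) (frobenius_norm_mul _ _))

lemma norm_toLp_mul_sub_mul_le {a a' w w' : ι → ℝ} {K : ℝ} (hK : 0 ≤ K)
    (ha' : ∀ i, |a' i| ≤ K) :
    ‖toLp 2 (a * w - a' * w')‖ ≤ ‖toLp 2 (a - a')‖ * ‖toLp 2 w‖ + K * ‖toLp 2 (w - w')‖ := by
  have h : a * w - a' * w' = w * (a - a') + a' * (w - w') := by ring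
  rw [h, toLp_add, mul_comm ‖toLp 2 (a - a')‖]
  refine (norm_add_le _ _).trans (add_le_add ?_ ?_) <;>
    refine norm_toLp_le_of_abs_le (by positivity) fun i => ?_ <;> rw [Pi.mul_apply, abs_mul]
  · exact mul_le_mul_of_nonneg_right (by simpa using PiLp.norm_apply_le (toLp 2 w) i)
      (abs_nonneg _)
  · exact mul_le_mul_of_nonneg_right (ha' i) (abs_nonneg _)

/-- `c ↦ (ρ + ρᵀ) G` is the adjoint of the derivative `c ↦ c Gᵀ + G cᵀ` of `G ↦ G Gᵀ`. -/
lemma Matrix.sum_mul_gram_deriv_eq (ρ : Matrix m m ℝ) (c G : Matrix m p ℝ) :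
    ∑ i, ∑ j, ρ i j * ∑ s, (c i s * G j s + G i s * c j s) =
      ∑ i, ∑ s, c i s * ((ρ + ρᵀ) * G) i s := by
  simp only [Matrix.mul_apply, Matrix.add_apply, Matrix.transpose_apply, add_mul, mul_add,
    Finset.mul_sum, Finset.sum_add_distrib]
  congr 1
  · rw [Finset.sum_congr rfl fun i _ => Finset.sum_comm]
    exact Finset.sum_congr rfl fun i _ => Finset.sum_congr rfl fun s _ =>
      Finset.sum_congr rfl fun j _ => by ring
  · rw [Finset.sum_comm]
    refine Finset.sum_congr rfl fun j _ => ?_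
    rw [Finset.sum_comm]
    exact Finset.sum_congr rfl fun s _ => Finset.sum_congr rfl fun i _ => by ring

end Norms

lemma mul_add_mul_le_sqrt_mul_sqrt (a b x y : ℝ) :
    a * x + b * y ≤ √(a ^ 2 + b ^ 2) * √(x ^ 2 + y ^ 2) := by
  rw [← Real.sqrt_mul (by positivity)]
  refine Real.le_sqrt_of_sq_le ?_
  nlinarith [sq_nonneg (a * y - b * x)]

lemma abs_sub_le_of_hasDerivAt {f f' : ℝ → ℝ} {K : ℝ} (hf : ∀ t, HasDerivAt f (f' t) t)
    (hK : ∀ t, |f' t| ≤ K) (a b : ℝ) : |f a - f b| ≤ K * |a - b| := by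
  simpa using convex_univ.norm_image_sub_le_of_norm_hasDerivWithin_le
    (fun x _ => (hf x).hasDerivWithinAt) (fun x _ => hK x) (Set.mem_univ b) (Set.mem_univ a)

section Flatten

variable {n k : ℕ}

lemma fidx_eq_finProdFinEquiv (i : Fin n) (s : Fin k) : fidx i s = finProdFinEquiv (i, s) := by
  ext
  simp only [fidx, finProdFinEquiv_apply_val]
  ring

lemma sum_fidx {M : Type*} [AddCommMonoid M] (F : Fin (n * k) → M) :
    ∑ i, ∑ s, F (fidx i s) = ∑ ν, F ν := by
  simp only [fidx_eq_finProdFinEquiv, ← Fintype.sum_prod_type']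
  exact Equiv.sum_comp finProdFinEquiv F

/-- The map `g` of the paper. -/
def unflatten (X : Fin (n * k) → ℝ) : Matrix (Fin n) (Fin k) ℝ :=
  Matrix.of fun i s => X (fidx i s)

def flatten (M : Matrix (Fin n) (Fin k) ℝ) : Fin (n * k) → ℝ :=
  fun ν => M (finProdFinEquiv.symm ν).1 (finProdFinEquiv.symm ν).2

@[simp]
lemma flatten_fidx (M : Matrix (Fin n) (Fin k) ℝ) (i : Fin n) (s : Fin k) :
    flatten M (fidx i s) = M i s := by
  simp [flatten, fidx_eq_finProdFinEquiv]

lemma unflatten_sub (X Y : Fin (n * k) → ℝ) : unflatten (X - Y) = unflatten X - unflatten Y :=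
  rfl

lemma flatten_sub (M N : Matrix (Fin n) (Fin k) ℝ) : flatten (M - N) = flatten M - flatten N :=
  rfl

lemma norm_unflatten (X : Fin (n * k) → ℝ) : ‖unflatten X‖ = ‖toLp 2 X‖ := by
  rw [Matrix.frobenius_norm_eq_sqrt, norm_toLp_eq_sqrt, ← sum_fidx]
  rfl

lemma norm_toLp_flatten (M : Matrix (Fin n) (Fin k) ℝ) : ‖toLp 2 (flatten M)‖ = ‖M‖ := by
  rw [Matrix.frobenius_norm_eq_sqrt, norm_toLp_eq_sqrt, ← sum_fidx]
  simp

end Flatten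

noncomputable def residualWeight {n k : ℕ} (μ' : ℝ → ℝ) (S : Matrix (Fin n) (Fin n) ℝ)
    (G : Matrix (Fin n) (Fin k) ℝ) : Matrix (Fin n) (Fin n) ℝ :=
  (G * Gᵀ - S).map μ'

/-- The gradient of `G ↦ ∑ i j, μ ((G Gᵀ - S) i j)` when `μ'` is the derivative of `μ`. -/
noncomputable def lossGrad {n k : ℕ} (μ' : ℝ → ℝ) (S : Matrix (Fin n) (Fin n) ℝ)
    (G : Matrix (Fin n) (Fin k) ℝ) : Matrix (Fin n) (Fin k) ℝ :=
  (residualWeight μ' S G + (residualWeight μ' S G)ᵀ) * G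

noncomputable def biasGrad {n k ℓ : ℕ} (σ' μ' : ℝ → ℝ) (S : Matrix (Fin n) (Fin n) ℝ)
    (C : Matrix (Fin (n * k)) (Fin ℓ) ℝ) (z : Fin ℓ → ℝ) (G : Matrix (Fin n) (Fin k) ℝ) :
    Fin ℓ → ℝ :=
  (σ' ∘ z) * (Cᵀ *ᵥ flatten (lossGrad μ' S G))

section BiasDerivative

variable {n k ℓ : ℕ} {σ σ' μ μ' : ℝ → ℝ} (S : Matrix (Fin n) (Fin n) ℝ)
  (A : Matrix (Fin ℓ) (UIdx n) ℝ) (b : Fin ℓ → ℝ) (C : Matrix (Fin (n * k)) (Fin ℓ) ℝ)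
  (d : Fin (n * k) → ℝ) (ι : Fin ℓ)

lemma omE_eq (i j : Fin n) :
    omE σ S A b C d i j =
      (unflatten (Xv σ S A b C d) * (unflatten (Xv σ S A b C d))ᵀ - S) i j := by
  simp [omE, Matrix.mul_apply, unflatten]

lemma hasDerivAt_Xv_bias (hσ : ∀ t, HasDerivAt σ (σ' t) t) (ν : Fin (n * k)) :
    HasDerivAt (fun t : ℝ => Xv σ S A (b + t • Pi.single ι 1) C d ν)
      (C ν ι * σ' (Zv S A b ι)) 0 := by
  set e : Fin ℓ → ℝ := Pi.single ι 1
  have hZ : ∀ (t : ℝ) i, Zv S A (b + t • e) i = Zv S A b i + e i * t :=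
    fun t i => by simp only [Zv, Pi.add_apply, Pi.smul_apply, smul_eq_mul]; ring
  have hY : ∀ i, HasDerivAt (fun t : ℝ => σ (Zv S A b i + e i * t)) (σ' (Zv S A b i) * e i) 0 :=
    fun i => ((hσ _).comp 0 (((hasDerivAt_id' 0).const_mul (e i)).const_add _)).congr_deriv
      (by simp)
  simp only [Xv, hZ, Matrix.mulVec, dotProduct]
  exact ((HasDerivAt.fun_sum fun i _ => (hY i).const_mul (C ν i)).add_const (d ν)).congr_deriv
    (by simp [e, Pi.single_apply])

lemma hasDerivAt_omE_bias (hσ : ∀ t, HasDerivAt σ (σ' t) t) (i j : Fin n) :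
    HasDerivAt (fun t : ℝ => omE σ S A (b + t • Pi.single ι 1) C d i j)
      (σ' (Zv S A b ι) * ∑ s, (C (fidx i s) ι * Xv σ S A b C d (fidx j s) +
        Xv σ S A b C d (fidx i s) * C (fidx j s) ι)) 0 := by
  refine ((HasDerivAt.fun_sum fun s _ => (hasDerivAt_Xv_bias S A b C d ι hσ (fidx i s)).mul
    (hasDerivAt_Xv_bias S A b C d ι hσ (fidx j s))).sub_const (S i j)).congr_deriv ?_
  simp only [zero_smul, add_zero, Finset.mul_sum]
  exact Finset.sum_congr rfl fun s _ => by ring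

lemma gbv_eq_biasGrad (hσ : ∀ t, HasDerivAt σ (σ' t) t) (hμ : ∀ t, HasDerivAt μ (μ' t) t) :
    gbv σ μ S A b C d = biasGrad σ' μ' S C (Zv S A b) (unflatten (Xv σ S A b C d)) := by
  funext ι
  have hφ := HasDerivAt.fun_sum (u := .univ) fun i _ => HasDerivAt.fun_sum (u := .univ)
    fun j _ => (hμ _).comp 0 (hasDerivAt_omE_bias S A b C d ι hσ i j)
  refine hφ.deriv.trans ?_
  rw [biasGrad, Pi.mul_apply, Function.comp_apply, Matrix.mulVec, dotProduct, ← sum_fidx]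
  simp only [zero_smul, add_zero, Matrix.transpose_apply, flatten_fidx]
  set G := unflatten (Xv σ S A b C d)
  set c : Matrix (Fin n) (Fin k) ℝ := unflatten fun ν => C ν ι
  calc _ = σ' (Zv S A b ι) *
        ∑ i, ∑ j, residualWeight μ' S G i j * ∑ s, (c i s * G j s + G i s * c j s) := by
        simp only [residualWeight, Matrix.map_apply, Finset.mul_sum]
        refine Finset.sum_congr rfl fun i _ => Finset.sum_congr rfl fun j _ =>
          Finset.sum_congr rfl fun s _ => ?_
        simp only [G, c, omE_eq]
        simp only [unflatten, Matrix.of_apply]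
        ring
    _ = _ := congrArg _ (Matrix.sum_mul_gram_deriv_eq _ _ _)

end BiasDerivative

section BiasGradBounds

variable {n k ℓ : ℕ} {σ' μ' : ℝ → ℝ} (S : Matrix (Fin n) (Fin n) ℝ)

lemma norm_residualWeight_le (hμ' : ∀ t, |μ' t| ≤ 1) (G : Matrix (Fin n) (Fin k) ℝ) :
    ‖residualWeight μ' S G‖ ≤ n := by
  simpa using Matrix.frobenius_norm_le_card (A := residualWeight μ' S G) fun i j => hμ' _

lemma norm_residualWeight_sub_le {K : ℝ} (hK : 0 ≤ K)
    (hμ' : ∀ a b, |μ' a - μ' b| ≤ K * |a - b|) (G G' : Matrix (Fin n) (Fin k) ℝ) :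
    ‖residualWeight μ' S G - residualWeight μ' S G'‖ ≤
      K * (‖G - G'‖ * ‖G‖ + ‖G'‖ * ‖G - G'‖) := by
  calc _ ≤ K * ‖G * Gᵀ - G' * G'ᵀ‖ :=
        Matrix.frobenius_norm_le_of_abs_le hK fun i j => by
          simpa [residualWeight] using hμ' ((G * Gᵀ - S) i j) ((G' * G'ᵀ - S) i j)
    _ ≤ _ := by
        gcongr
        simpa [← Matrix.transpose_sub] using Matrix.frobenius_norm_mul_sub_mul_le G G' Gᵀ G'ᵀ

lemma norm_lossGrad_le (hμ' : ∀ t, |μ' t| ≤ 1) (G : Matrix (Fin n) (Fin k) ℝ) :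
    ‖lossGrad μ' S G‖ ≤ 2 * n * ‖G‖ := by
  refine (Matrix.frobenius_norm_mul _ _).trans ?_
  gcongr
  exact (Matrix.frobenius_norm_add_transpose_le _).trans
    (by gcongr; exact norm_residualWeight_le S hμ' G)

lemma norm_lossGrad_sub_le {K : ℝ} (hK : 0 ≤ K) (hμ'1 : ∀ t, |μ' t| ≤ 1)
    (hμ' : ∀ a b, |μ' a - μ' b| ≤ K * |a - b|) {R : ℝ} (G G' : Matrix (Fin n) (Fin k) ℝ)
    (hG : ‖G‖ ≤ R) (hG' : ‖G'‖ ≤ R) :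
    ‖lossGrad μ' S G - lossGrad μ' S G'‖ ≤ (4 * K * R ^ 2 + 2 * n) * ‖G - G'‖ := by
  have hR : 0 ≤ R := (norm_nonneg _).trans hG
  have hρ := norm_residualWeight_sub_le S hK hμ' G G'
  have hρ' := norm_residualWeight_le S hμ'1 G'
  calc _ ≤ ‖(residualWeight μ' S G + (residualWeight μ' S G)ᵀ) -
          (residualWeight μ' S G' + (residualWeight μ' S G')ᵀ)‖ * ‖G‖ +
        ‖residualWeight μ' S G' + (residualWeight μ' S G')ᵀ‖ * ‖G - G'‖ :=
        Matrix.frobenius_norm_mul_sub_mul_le _ _ _ _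
    _ ≤ 2 * (K * (‖G - G'‖ * R + R * ‖G - G'‖)) * R + 2 * n * ‖G - G'‖ := by
        rw [add_sub_add_comm, ← Matrix.transpose_sub]
        gcongr
        · exact (Matrix.frobenius_norm_add_transpose_le _).trans
            (by gcongr; exact hρ.trans (by gcongr))
        · exact (Matrix.frobenius_norm_add_transpose_le _).trans (by gcongr)
    _ = _ := by ring

lemma norm_biasGrad_sub_le {s₁ s₂ K D R : ℝ} (hs₁ : 0 ≤ s₁) (hσ' : ∀ t, |σ' t| ≤ s₁)
    (hs₂ : 0 ≤ s₂) (hσ'' : ∀ a b, |σ' a - σ' b| ≤ s₂ * |a - b|) (hK : 0 ≤ K)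
    (hμ'1 : ∀ t, |μ' t| ≤ 1) (hμ' : ∀ a b, |μ' a - μ' b| ≤ K * |a - b|)
    (C C' : Matrix (Fin (n * k)) (Fin ℓ) ℝ) (z z' : Fin ℓ → ℝ) (G G' : Matrix (Fin n) (Fin k) ℝ)
    (hC : ‖C‖ ≤ D) (hC' : ‖C'‖ ≤ D) (hG : ‖G‖ ≤ R) (hG' : ‖G'‖ ≤ R) :
    ‖toLp 2 (biasGrad σ' μ' S C z G - biasGrad σ' μ' S C' z' G')‖ ≤
      s₂ * ‖toLp 2 (z - z')‖ * (2 * n * D * R) +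
        s₁ * (2 * n * R * ‖C - C'‖ + D * ((4 * K * R ^ 2 + 2 * n) * ‖G - G'‖)) := by
  have hD : 0 ≤ D := (norm_nonneg _).trans hC
  have hW : ‖toLp 2 (Cᵀ *ᵥ flatten (lossGrad μ' S G))‖ ≤ 2 * n * D * R := by
    refine (Matrix.norm_toLp_mulVec_le _ _).trans ?_
    rw [Matrix.frobenius_norm_transpose, norm_toLp_flatten]
    calc ‖C‖ * ‖lossGrad μ' S G‖ ≤ D * (2 * n * R) :=
          mul_le_mul hC ((norm_lossGrad_le S hμ'1 G).trans (by gcongr)) (norm_nonneg _) hD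
      _ = _ := by ring
  have hΔW : ‖toLp 2 (Cᵀ *ᵥ flatten (lossGrad μ' S G) - C'ᵀ *ᵥ flatten (lossGrad μ' S G'))‖ ≤
      2 * n * R * ‖C - C'‖ + D * ((4 * K * R ^ 2 + 2 * n) * ‖G - G'‖) := by
    refine (Matrix.norm_toLp_mulVec_sub_mulVec_le _ _ _ _).trans ?_
    rw [← Matrix.transpose_sub, ← flatten_sub, Matrix.frobenius_norm_transpose,
      Matrix.frobenius_norm_transpose, norm_toLp_flatten, norm_toLp_flatten, mul_comm]
    gcongr
    · exact (norm_lossGrad_le S hμ'1 G).trans (by gcongr)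
    · exact norm_lossGrad_sub_le S hK hμ'1 hμ' G G' hG hG'
  have hΔσ' : ‖toLp 2 (σ' ∘ z - σ' ∘ z')‖ ≤ s₂ * ‖toLp 2 (z - z')‖ :=
    norm_toLp_le_of_abs_le hs₂ fun i => hσ'' _ _
  calc _ ≤ ‖toLp 2 (σ' ∘ z - σ' ∘ z')‖ * ‖toLp 2 (Cᵀ *ᵥ flatten (lossGrad μ' S G))‖ +
        s₁ * ‖toLp 2 (Cᵀ *ᵥ flatten (lossGrad μ' S G) - C'ᵀ *ᵥ flatten (lossGrad μ' S G'))‖ :=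
        norm_toLp_mul_sub_mul_le hs₁ fun i => hσ' _
    _ ≤ _ := by gcongr

end BiasGradBounds

section ForwardBounds

variable {n k ℓ : ℕ} {σ : ℝ → ℝ} (S : Matrix (Fin n) (Fin n) ℝ)

lemma norm_Zv_sub_le (A A' : Matrix (Fin ℓ) (UIdx n) ℝ) (b b' : Fin ℓ → ℝ) :
    ‖toLp 2 (Zv S A b - Zv S A' b')‖ ≤
      √(1 + ∑ p, hv S p ^ 2) * √(‖A - A'‖ ^ 2 + ‖toLp 2 (b - b')‖ ^ 2) := by
  have h := Matrix.norm_toLp_affine_sub_le A A' (hv S) (hv S) b b'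
  rw [sub_self, toLp_zero, norm_zero, mul_zero, add_zero] at h
  have hη : ‖toLp 2 (hv S)‖ ^ 2 + 1 ^ 2 = 1 + ∑ p, hv S p ^ 2 := by
    rw [norm_toLp_eq_sqrt, Real.sq_sqrt (by positivity)]; ring
  have hcs := mul_add_mul_le_sqrt_mul_sqrt ‖A - A'‖ ‖toLp 2 (b - b')‖ ‖toLp 2 (hv S)‖ 1
  rw [hη, mul_one] at hcs
  exact h.trans (hcs.trans_eq (mul_comm _ _))

lemma norm_Xv_le (hσ : ∀ t, |σ t| ≤ 1) (A : Matrix (Fin ℓ) (UIdx n) ℝ) (b : Fin ℓ → ℝ)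
    (C : Matrix (Fin (n * k)) (Fin ℓ) ℝ) (d : Fin (n * k) → ℝ) :
    ‖toLp 2 (Xv σ S A b C d)‖ ≤ ‖C‖ * √ℓ + ‖toLp 2 d‖ := by
  rw [show Xv σ S A b C d = C *ᵥ (σ ∘ Zv S A b) + d from rfl, toLp_add]
  refine (norm_add_le _ _).trans (add_le_add_left ((Matrix.norm_toLp_mulVec_le _ _).trans ?_) _)
  gcongr
  exact (norm_toLp_le_sqrt_card (u := σ ∘ Zv S A b) fun i => hσ _).trans_eq (by simp)

lemma norm_Xv_sub_le {K : ℝ} (hσ : ∀ t, |σ t| ≤ 1) (hK : 0 ≤ K)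
    (hσK : ∀ a b, |σ a - σ b| ≤ K * |a - b|) (A A' : Matrix (Fin ℓ) (UIdx n) ℝ)
    (b b' : Fin ℓ → ℝ) (C C' : Matrix (Fin (n * k)) (Fin ℓ) ℝ) (d d' : Fin (n * k) → ℝ) :
    ‖toLp 2 (Xv σ S A b C d - Xv σ S A' b' C' d')‖ ≤
      ‖C - C'‖ * √ℓ + ‖C'‖ * (K * ‖toLp 2 (Zv S A b - Zv S A' b')‖) + ‖toLp 2 (d - d')‖ := by
  refine (Matrix.norm_toLp_affine_sub_le _ _ _ _ _ _).trans ?_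
  gcongr
  · exact (norm_toLp_le_sqrt_card (u := σ ∘ Zv S A b) fun i => hσ _).trans_eq (by simp)
  · exact norm_toLp_le_of_abs_le hK fun i => hσK _ _

end ForwardBounds

section ParameterNorm

variable {n k ℓ : ℕ} (A : Matrix (Fin ℓ) (UIdx n) ℝ) (b : Fin ℓ → ℝ)
  (C : Matrix (Fin (n * k)) (Fin ℓ) ℝ) (d : Fin (n * k) → ℝ)

lemma pns_eq : pns A b C d = ‖A‖ ^ 2 + ‖toLp 2 b‖ ^ 2 + ‖C‖ ^ 2 + ‖toLp 2 d‖ ^ 2 := by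
  simp only [pns, Matrix.frobenius_norm_eq_sqrt, norm_toLp_eq_sqrt]
  rw [Real.sq_sqrt (by positivity), Real.sq_sqrt (by positivity), Real.sq_sqrt (by positivity),
    Real.sq_sqrt (by positivity)]

lemma norms_le_sqrt_pns :
    √(‖A‖ ^ 2 + ‖toLp 2 b‖ ^ 2) ≤ √(pns A b C d) ∧ ‖C‖ ≤ √(pns A b C d) ∧
      ‖toLp 2 d‖ ≤ √(pns A b C d) := by
  have := sq_nonneg ‖A‖; have := sq_nonneg ‖toLp 2 b‖
  have := sq_nonneg ‖C‖; have := sq_nonneg ‖toLp 2 d‖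
  rw [pns_eq]
  exact ⟨Real.sqrt_le_sqrt (by linarith), Real.le_sqrt_of_sq_le (by linarith),
    Real.le_sqrt_of_sq_le (by linarith)⟩

end ParameterNorm

/-- Here `2 * D * √ℓ` bounds `‖g(X)‖`, `√q` is `L_Z` and `2 * √ℓ + s₁ * D * √q` is a Lipschitz
constant of `Θ ↦ X` on the ball of radius `D`. -/
noncomputable def biasLipConst (s₁ s₂ K n ℓ D q : ℝ) : ℝ :=
  s₂ * √q * (2 * n * D * (2 * D * √ℓ)) +
    s₁ * (2 * n * (2 * D * √ℓ) +
      D * ((4 * K * (2 * D * √ℓ) ^ 2 + 2 * n) * (2 * √ℓ + s₁ * D * √q)))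

lemma biasLipConst_nonneg {s₁ s₂ K n ℓ D q : ℝ} (hs₁ : 0 ≤ s₁) (hs₂ : 0 ≤ s₂) (hK : 0 ≤ K)
    (hn : 0 ≤ n) (hD : 0 ≤ D) : 0 ≤ biasLipConst s₁ s₂ K n ℓ D q := by
  unfold biasLipConst
  positivity

lemma biasLipConst_sq_le_six_mul {s₁ s₂ K n r D L : ℝ} (hr : 0 ≤ r) (hL : 0 ≤ L) :
    biasLipConst s₁ s₂ K n (r ^ 2) D (L ^ 2) ^ 2 ≤
      6 * ((4 * s₂ * n * D ^ 2 * r * L) ^ 2 + ((4 * s₁ * n * D * r) ^ 2 +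
        ((32 * s₁ * K * D ^ 3 * r ^ 3) ^ 2 + ((16 * s₁ ^ 2 * K * D ^ 4 * r ^ 2 * L) ^ 2 +
          ((4 * s₁ * n * D * r) ^ 2 + (2 * s₁ ^ 2 * n * D ^ 2 * L) ^ 2))))) := by
  have hcs := sq_sum_le_card_mul_sum_sq (s := Finset.univ) (f := ![4 * s₂ * n * D ^ 2 * r * L,
    4 * s₁ * n * D * r, 32 * s₁ * K * D ^ 3 * r ^ 3, 16 * s₁ ^ 2 * K * D ^ 4 * r ^ 2 * L,
    4 * s₁ * n * D * r, 2 * s₁ ^ 2 * n * D ^ 2 * L])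
  simp only [Fin.sum_univ_succ, Fin.sum_univ_zero, Finset.card_univ, Fintype.card_fin,
    Matrix.cons_val_zero, Matrix.cons_val_succ, add_zero, Nat.succ_eq_add_one, Nat.reduceAdd,
    Nat.cast_ofNat] at hcs
  simp only [biasLipConst, Real.sqrt_sq hr, Real.sqrt_sq hL]
  exact (le_of_eq (by ring)).trans hcs

lemma biasLipConst_sq_le {s₁ s₂ K n ℓ D q : ℝ} (hn : 1 ≤ n) (hℓ : 1 ≤ ℓ) (hq : 0 ≤ q) :
    biasLipConst s₁ s₂ K n ℓ D q ^ 2 ≤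
      8000 * (1 + s₁ ^ 2) ^ 2 * (1 + s₂ ^ 2) * (1 + K ^ 2) * n ^ 2 * D ^ 2 *
        max (max (ℓ * D ^ 2 * q) (ℓ ^ 2 * D ^ 6 * q)) (max (ℓ ^ 3 * D ^ 4) (n * ℓ)) := by
  obtain ⟨r, hr, rfl⟩ : ∃ r, 0 ≤ r ∧ r ^ 2 = ℓ :=
    ⟨√ℓ, Real.sqrt_nonneg _, Real.sq_sqrt (by linarith)⟩
  obtain ⟨L, hL, rfl⟩ : ∃ L, 0 ≤ L ∧ L ^ 2 = q := ⟨√q, Real.sqrt_nonneg _, Real.sq_sqrt hq⟩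
  set M := max (max (r ^ 2 * D ^ 2 * L ^ 2) ((r ^ 2) ^ 2 * D ^ 6 * L ^ 2))
    (max ((r ^ 2) ^ 3 * D ^ 4) (n * r ^ 2))
  have hM₁ : r ^ 2 * D ^ 2 * L ^ 2 ≤ M := le_max_of_le_left (le_max_left _ _)
  have hM₂ : (r ^ 2) ^ 2 * D ^ 6 * L ^ 2 ≤ M := le_max_of_le_left (le_max_right _ _)
  have hM₃ : (r ^ 2) ^ 3 * D ^ 4 ≤ M := le_max_of_le_right (le_max_left _ _)
  have hM₄ : r ^ 2 ≤ M := le_trans (by nlinarith) (le_max_of_le_right (le_max_right _ _))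
  have hM₅ : D ^ 2 * L ^ 2 ≤ M := le_trans (by nlinarith [sq_nonneg (D * L)]) hM₁
  have hn2 : 1 ≤ n ^ 2 := by nlinarith
  have ha₁ : 1 ≤ (1 + s₁ ^ 2) ^ 2 := by nlinarith [sq_nonneg s₁]
  have ha₂ : s₁ ^ 2 ≤ (1 + s₁ ^ 2) ^ 2 := by nlinarith [sq_nonneg s₁]
  have ha₄ : s₁ ^ 4 ≤ (1 + s₁ ^ 2) ^ 2 := by nlinarith [sq_nonneg s₁]
  have hb₁ : 1 ≤ 1 + s₂ ^ 2 := by nlinarith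
  have hb₂ : s₂ ^ 2 ≤ 1 + s₂ ^ 2 := by nlinarith
  have hc₁ : 1 ≤ 1 + K ^ 2 := by nlinarith
  have hc₂ : K ^ 2 ≤ 1 + K ^ 2 := by nlinarith
  set P := (1 + s₁ ^ 2) ^ 2 * (1 + s₂ ^ 2) * (1 + K ^ 2)
  have h₁ : (4 * s₂ * n * D ^ 2 * r * L) ^ 2 ≤ 16 * P * (n ^ 2 * D ^ 2 * M) :=
    calc _ = 16 * (1 * s₂ ^ 2 * 1) * (n ^ 2 * D ^ 2 * (r ^ 2 * D ^ 2 * L ^ 2)) := by ring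
      _ ≤ _ := by simp only [P]; gcongr
  have h₂ : (4 * s₁ * n * D * r) ^ 2 ≤ 16 * P * (n ^ 2 * D ^ 2 * M) :=
    calc _ = 16 * (s₁ ^ 2 * 1 * 1) * (n ^ 2 * D ^ 2 * r ^ 2) := by ring
      _ ≤ _ := by simp only [P]; gcongr
  have h₃ : (32 * s₁ * K * D ^ 3 * r ^ 3) ^ 2 ≤ 1024 * P * (n ^ 2 * D ^ 2 * M) :=
    calc _ = 1024 * (s₁ ^ 2 * 1 * K ^ 2) * (1 * D ^ 2 * ((r ^ 2) ^ 3 * D ^ 4)) := by ring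
      _ ≤ _ := by simp only [P]; gcongr
  have h₄ : (16 * s₁ ^ 2 * K * D ^ 4 * r ^ 2 * L) ^ 2 ≤ 256 * P * (n ^ 2 * D ^ 2 * M) :=
    calc _ = 256 * (s₁ ^ 4 * 1 * K ^ 2) * (1 * D ^ 2 * ((r ^ 2) ^ 2 * D ^ 6 * L ^ 2)) := by ring
      _ ≤ _ := by simp only [P]; gcongr
  have h₅ : (2 * s₁ ^ 2 * n * D ^ 2 * L) ^ 2 ≤ 4 * P * (n ^ 2 * D ^ 2 * M) :=
    calc _ = 4 * (s₁ ^ 4 * 1 * 1) * (n ^ 2 * D ^ 2 * (D ^ 2 * L ^ 2)) := by ring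
      _ ≤ _ := by simp only [P]; gcongr
  have hPM : 0 ≤ P * (n ^ 2 * D ^ 2 * M) := by positivity
  calc _ ≤ _ := biasLipConst_sq_le_six_mul hr hL
    _ ≤ 8000 * (P * (n ^ 2 * D ^ 2 * M)) := by linarith
    _ = _ := by ring

section Lipschitz

variable {n k ℓ : ℕ} {σ σ' σ'' μ μ' μ'' : ℝ → ℝ} {s₁ s₂ K : ℝ}
  (S : Matrix (Fin n) (Fin n) ℝ) {D : ℝ} (A A' : Matrix (Fin ℓ) (UIdx n) ℝ) (b b' : Fin ℓ → ℝ)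
  (C C' : Matrix (Fin (n * k)) (Fin ℓ) ℝ) (d d' : Fin (n * k) → ℝ)

lemma norm_unflatten_Xv_le (hℓ : 1 ≤ ℓ) (hσ : ∀ t, |σ t| ≤ 1) (hθ : √(pns A b C d) ≤ D) :
    ‖unflatten (Xv σ S A b C d)‖ ≤ 2 * D * √ℓ := by
  obtain ⟨-, hC, hd⟩ := norms_le_sqrt_pns A b C d
  have hℓ' : 1 ≤ √ℓ := Real.one_le_sqrt.2 (by exact_mod_cast hℓ)
  rw [norm_unflatten]
  refine (norm_Xv_le S hσ A b C d).trans ?_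
  nlinarith [hC.trans hθ, hd.trans hθ, norm_nonneg C]

lemma norm_unflatten_Xv_sub_le (hℓ : 1 ≤ ℓ) (hσ : ∀ t, HasDerivAt σ (σ' t) t)
    (hσ1 : ∀ t, |σ t| ≤ 1) (hσ'b : ∀ t, |σ' t| ≤ s₁) (hθ' : √(pns A' b' C' d') ≤ D) :
    ‖unflatten (Xv σ S A b C d) - unflatten (Xv σ S A' b' C' d')‖ ≤
      (2 * √ℓ + s₁ * D * √(1 + ∑ p, hv S p ^ 2)) * √(pns (A - A') (b - b') (C - C') (d - d')) := by
  have hs₁ : 0 ≤ s₁ := (abs_nonneg _).trans (hσ'b 0)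
  have hD : 0 ≤ D := (Real.sqrt_nonneg _).trans hθ'
  have hℓ' : 1 ≤ √ℓ := Real.one_le_sqrt.2 (by exact_mod_cast hℓ)
  obtain ⟨-, hC', -⟩ := norms_le_sqrt_pns A' b' C' d'
  obtain ⟨hΔAb, hΔC, hΔd⟩ := norms_le_sqrt_pns (A - A') (b - b') (C - C') (d - d')
  set δ := √(pns (A - A') (b - b') (C - C') (d - d'))
  have hZ : ‖toLp 2 (Zv S A b - Zv S A' b')‖ ≤ √(1 + ∑ p, hv S p ^ 2) * δ :=
    (norm_Zv_sub_le S A A' b b').trans (by gcongr)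
  rw [← unflatten_sub, norm_unflatten]
  refine (norm_Xv_sub_le S hσ1 hs₁ (abs_sub_le_of_hasDerivAt hσ hσ'b) A A' b b' C C' d d').trans ?_
  calc _ ≤ δ * √ℓ + D * (s₁ * (√(1 + ∑ p, hv S p ^ 2) * δ)) + δ := by
        gcongr; exact hC'.trans hθ'
    _ ≤ _ := by nlinarith [Real.sqrt_nonneg (pns (A - A') (b - b') (C - C') (d - d'))]

theorem sqrt_sum_sq_gbv_sub_le (hℓ : 1 ≤ ℓ)
    (hσ : ∀ t, HasDerivAt σ (σ' t) t) (hσ' : ∀ t, HasDerivAt σ' (σ'' t) t)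
    (hσ1 : ∀ t, |σ t| ≤ 1) (hσ'b : ∀ t, |σ' t| ≤ s₁) (hσ''b : ∀ t, |σ'' t| ≤ s₂)
    (hμ : ∀ t, HasDerivAt μ (μ' t) t) (hμ' : ∀ t, HasDerivAt μ' (μ'' t) t)
    (hμ'b : ∀ t, |μ' t| ≤ 1) (hμ''b : ∀ t, |μ'' t| ≤ K)
    (hθ : √(pns A b C d) ≤ D) (hθ' : √(pns A' b' C' d') ≤ D) :
    √(∑ ι, (gbv σ μ S A b C d ι - gbv σ μ S A' b' C' d' ι) ^ 2) ≤
      biasLipConst s₁ s₂ K n ℓ D (1 + ∑ p, hv S p ^ 2) *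
        √(pns (A - A') (b - b') (C - C') (d - d')) := by
  have hs₁ : 0 ≤ s₁ := (abs_nonneg _).trans (hσ'b 0)
  have hs₂ : 0 ≤ s₂ := (abs_nonneg _).trans (hσ''b 0)
  have hK : 0 ≤ K := (abs_nonneg _).trans (hμ''b 0)
  have hD : 0 ≤ D := (Real.sqrt_nonneg _).trans hθ
  obtain ⟨-, hC, -⟩ := norms_le_sqrt_pns A b C d
  obtain ⟨-, hC', -⟩ := norms_le_sqrt_pns A' b' C' d'
  obtain ⟨hΔAb, hΔC, -⟩ := norms_le_sqrt_pns (A - A') (b - b') (C - C') (d - d')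
  set δ := √(pns (A - A') (b - b') (C - C') (d - d'))
  set LZ := √(1 + ∑ p, hv S p ^ 2)
  have hZ : ‖toLp 2 (Zv S A b - Zv S A' b')‖ ≤ LZ * δ :=
    (norm_Zv_sub_le S A A' b b').trans (by gcongr)
  have hX := norm_unflatten_Xv_sub_le S A A' b b' C C' d d' hℓ hσ hσ1 hσ'b hθ'
  have hg := norm_biasGrad_sub_le S hs₁ hσ'b hs₂ (abs_sub_le_of_hasDerivAt hσ' hσ''b) hK hμ'b
    (abs_sub_le_of_hasDerivAt hμ' hμ''b) C C' (Zv S A b) (Zv S A' b') _ _ (hC.trans hθ)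
    (hC'.trans hθ') (norm_unflatten_Xv_le S A b C d hℓ hσ1 hθ)
    (norm_unflatten_Xv_le S A' b' C' d' hℓ hσ1 hθ')
  rw [← gbv_eq_biasGrad S A b C d hσ hμ, ← gbv_eq_biasGrad S A' b' C' d' hσ hμ] at hg
  refine ((norm_toLp_eq_sqrt _).symm.trans_le hg).trans ?_
  have hLb : biasLipConst s₁ s₂ K n ℓ D (1 + ∑ p, hv S p ^ 2) * δ =
      s₂ * (LZ * δ) * (2 * n * D * (2 * D * √ℓ)) + s₁ * (2 * n * (2 * D * √ℓ) * δ +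
        D * ((4 * K * (2 * D * √ℓ) ^ 2 + 2 * n) * ((2 * √ℓ + s₁ * D * LZ) * δ))) := by
    unfold biasLipConst; ring
  rw [hLb]
  gcongr

end Lipschitz

/-- Lemma 4 of the paper: the map `Θ ↦ ∂φ̃/∂b` is Lipschitz on the ball of
radius `D`, with Lipschitz constant `L_b` satisfying
`L_b² ≤ C_b n² D² max{ℓ D² L_Z², ℓ² D⁶ L_Z², ℓ³ D⁴, n ℓ}`, where the constant
`C_b` depends only on `σ'_max`, `σ''_max` and `μ''_max`. -/
theorem stmt_4 (σ'max σ''max μ''max : ℝ) :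
    ∃ Cb : ℝ, 0 < Cb ∧
      ∀ (n k ℓ : ℕ), 1 ≤ n → 1 ≤ k → 1 ≤ ℓ →
      ∀ (σ σ' σ'' μ μ' μ'' : ℝ → ℝ),
        (∀ t, HasDerivAt σ (σ' t) t) → (∀ t, HasDerivAt σ' (σ'' t) t) →
        (∀ t, σ t ∈ Set.Icc (-1 : ℝ) 1) →
        (∀ t, |σ' t| ≤ σ'max) → (∀ t, |σ'' t| ≤ σ''max) →
        (∀ t, HasDerivAt μ (μ' t) t) → (∀ t, HasDerivAt μ' (μ'' t) t) →
        (∀ t, 0 ≤ μ t) → (∀ t, |μ' t| ≤ 1) → (∀ t, |μ'' t| ≤ μ''max) →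
      ∀ (S : Matrix (Fin n) (Fin n) ℝ), S.IsSymm →
      ∀ D : ℝ, 0 < D →
      ∃ Lb : ℝ, 0 ≤ Lb ∧
        Lb ^ 2 ≤ Cb * (n : ℝ) ^ 2 * D ^ 2 *
          max (max ((ℓ : ℝ) * D ^ 2 * (1 + ∑ p : UIdx n, hv S p ^ 2))
              ((ℓ : ℝ) ^ 2 * D ^ 6 * (1 + ∑ p : UIdx n, hv S p ^ 2)))
            (max ((ℓ : ℝ) ^ 3 * D ^ 4) ((n : ℝ) * (ℓ : ℝ))) ∧
        ∀ (A Abar : Matrix (Fin ℓ) (UIdx n) ℝ) (b bbar : Fin ℓ → ℝ)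
          (C Cbar : Matrix (Fin (n * k)) (Fin ℓ) ℝ) (d dbar : Fin (n * k) → ℝ),
          Real.sqrt (pns A b C d) ≤ D → Real.sqrt (pns Abar bbar Cbar dbar) ≤ D →
          Real.sqrt (∑ ι, (gbv σ μ S A b C d ι - gbv σ μ S Abar bbar Cbar dbar ι) ^ 2) ≤
            Lb * Real.sqrt (pns (A - Abar) (b - bbar) (C - Cbar) (d - dbar)) := by
  refine ⟨8000 * (1 + σ'max ^ 2) ^ 2 * (1 + σ''max ^ 2) * (1 + μ''max ^ 2), by positivity, ?_⟩
  intro n k ℓ hn _ hℓ σ σ' σ'' μ μ' μ'' hσ hσ' hσI hσ'b hσ''b hμ hμ' _ hμ'b hμ''b S _ D hD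
  refine ⟨biasLipConst σ'max σ''max μ''max n ℓ D (1 + ∑ p, hv S p ^ 2), ?_,
    biasLipConst_sq_le (by exact_mod_cast hn) (by exact_mod_cast hℓ) (by positivity),
    fun A A' b b' C C' d d' hθ hθ' => sqrt_sum_sq_gbv_sub_le S A A' b b' C C' d d' hℓ hσ hσ'
      (fun t => abs_le.2 (hσI t)) hσ'b hσ''b hμ hμ' hμ'b hμ''b hθ hθ'⟩
  exact biasLipConst_nonneg ((abs_nonneg _).trans (hσ'b 0)) ((abs_nonneg _).trans (hσ''b 0))
    ((abs_nonneg _).trans (hμ''b 0)) (Nat.cast_nonneg n) hD.le
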